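/- arXiv:1309.4022 — 3 statements merged into one kernel-verified Lean document; each statement's English description precedes it below -/
import Mathlib

section
/- The universal clique decomposition of a connected trivially perfect graph is unique up to isomorphism: if (T, {B_t}) and (T', {B'_t}) are two universal clique decompositions of the same connected trivially perfect graph G, then there is an isomorphism f of the rooted tree T onto the rooted tree T' (mapping the root to the root and preserving the child relation) such that B'_{f(t)} = B_t for every node t of T. -/
/-!
In a universal clique decomposition, a vertex `w` lies in a bag at or below the bag of `v`
exactly when the closed neighbourhood of `w` is contained in that of `v`. So the tree order on
the nodes, and the partition of the vertices into bags, are both read off from the graph alone,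
and any two decompositions are identified by sending the bag of `v` to the bag of `v`.
-/

open SimpleGraph

universe u

/-- A graph is *trivially perfect* if it has no induced subgraph isomorphic to `C₄` or `P₄`. -/
def TriviallyPerfect {V : Type u} (G : SimpleGraph V) : Prop :=
  IsEmpty (SimpleGraph.cycleGraph 4 ↪g G) ∧ IsEmpty (SimpleGraph.pathGraph 4 ↪g G)

/-- A *universal clique decomposition* of a graph `G`: a finite rooted tree (modelled as a
finite partial order in which the set of elements above any element is a chain and which has
a top element, the root) together with a partition of the vertices into nonempty bags such that
adjacent vertices lie in comparable nodes, and each bag is exactly the set of universal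
vertices of the subgraph induced by the union of the bags in the subtree below it. -/
structure UCD {V : Type u} (G : SimpleGraph V) : Type (u + 1) where
  ι : Type u
  [po : PartialOrder ι]
  [ot : OrderTop ι]
  [fin : Fintype ι]
  bag : ι → Set V
  bag_nonempty : ∀ t, (bag t).Nonempty
  bag_disjoint : ∀ s t, s ≠ t → Disjoint (bag s) (bag t)
  bag_cover : ∀ v, ∃ t, v ∈ bag t
  up_chain : ∀ a b c : ι, a ≤ b → a ≤ c → b ≤ c ∨ c ≤ b
  adj_comparable : ∀ v w s t, G.Adj v w → v ∈ bag t → w ∈ bag s → s ≤ t ∨ t ≤ s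
  bag_eq_universal : ∀ t, bag t =
    {v | (∃ s ≤ t, v ∈ bag s) ∧ ∀ w, (∃ s ≤ t, w ∈ bag s) → w ≠ v → G.Adj v w}

attribute [instance] UCD.po UCD.ot UCD.fin

namespace UCD

variable {V : Type u} {G : SimpleGraph V} (U : UCD G)

/-- `D_t`: the union of the bags in the subtree rooted at `t`. -/
def subtreeSet (t : U.ι) : Set V := {v | ∃ s, s ≤ t ∧ v ∈ U.bag s}

/-- `Q_t`: the union of the bags on the path from `t` to the root. -/
def tailSet (t : U.ι) : Set V := {v | ∃ s, t ≤ s ∧ v ∈ U.bag s}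

/-- `t` is a leaf of the decomposition tree. -/
def IsLeaf (t : U.ι) : Prop := ∀ s : U.ι, s ≤ t → s = t

end UCD

/-- `G + S`: the graph obtained from `G` by adding the pairs in `S` as edges. -/
def completes {V : Type u} (G : SimpleGraph V) (S : Set (Sym2 V)) : SimpleGraph V :=
  G ⊔ SimpleGraph.fromEdgeSet S

/-- `S` is a set of non-edges of `G` (unordered pairs of distinct vertices, none an edge). -/
def IsCompletionSet {V : Type u} (G : SimpleGraph V) (S : Set (Sym2 V)) : Prop :=
  (∀ e ∈ S, ¬ e.IsDiag) ∧ Disjoint S G.edgeSet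

/-- `S` is a minimal trivially perfect completion of `G`. -/
def IsMinTPCompletion {V : Type u} (G : SimpleGraph V) (S : Set (Sym2 V)) : Prop :=
  IsCompletionSet G S ∧ TriviallyPerfect (completes G S) ∧
    ∀ S' ⊂ S, ¬ TriviallyPerfect (completes G S')

/-- A vital potential maximal clique of `(G, k)`. -/
def VitalPMC {V : Type u} (G : SimpleGraph V) (k : ℕ) (Ω : Set V) : Prop :=
  ∃ S, IsMinTPCompletion G S ∧ S.ncard ≤ k ∧ Maximal (completes G S).IsClique Ω

theorem exists_orderIso_comp_eq {X α β : Type*} [PartialOrder α] [PartialOrder β]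
    {p : X → α} {q : X → β} (hp : Function.Surjective p) (hq : Function.Surjective q)
    (hpq : ∀ x y, p x ≤ p y ↔ q x ≤ q y) : ∃ f : α ≃o β, ∀ x, f (p x) = q x := by
  let e := Function.surjInv hp
  have hq_e : ∀ x, q (e (p x)) = q x := fun x =>
    le_antisymm ((hpq _ _).1 (Function.surjInv_eq hp _).le)
      ((hpq _ _).1 (Function.surjInv_eq hp _).ge)
  let F : α ↪o β := OrderEmbedding.ofMapLEIff (q ∘ e) fun s t => by
    conv_rhs => rw [← Function.surjInv_eq hp s, ← Function.surjInv_eq hp t]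
    exact (hpq _ _).symm
  have hF : Function.Surjective F := fun b => by
    obtain ⟨x, rfl⟩ := hq b
    exact ⟨p x, hq_e x⟩
  exact ⟨OrderIso.ofSurjective F hF, hq_e⟩

namespace SimpleGraph

variable {V : Type u} (G : SimpleGraph V)

def closedNeighborSet (v : V) : Set V := insert v (G.neighborSet v)

variable {G}

theorem mem_closedNeighborSet {v x : V} : x ∈ G.closedNeighborSet v ↔ x = v ∨ G.Adj v x :=
  Iff.rfl

end SimpleGraph

namespace UCD

variable {V : Type u} {G : SimpleGraph V} (U : UCD G)

noncomputable def node (v : V) : U.ι := (U.bag_cover v).choose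

variable {U}

theorem mem_bag_iff_node_eq {v : V} {t : U.ι} : v ∈ U.bag t ↔ U.node v = t := by
  have hv : v ∈ U.bag (U.node v) := (U.bag_cover v).choose_spec
  refine ⟨fun ht => ?_, fun h => h ▸ hv⟩
  by_contra hne
  exact (U.bag_disjoint _ _ hne).le_bot ⟨hv, ht⟩

theorem mem_bag_node (v : V) : v ∈ U.bag (U.node v) := mem_bag_iff_node_eq.2 rfl

theorem node_surjective : Function.Surjective U.node := fun t =>
  let ⟨v, hv⟩ := U.bag_nonempty t
  ⟨v, mem_bag_iff_node_eq.1 hv⟩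

theorem bag_eq_preimage_node (t : U.ι) : U.bag t = U.node ⁻¹' {t} :=
  Set.ext fun _ => mem_bag_iff_node_eq

theorem exists_le_mem_bag_iff {v : V} {t : U.ι} : (∃ s ≤ t, v ∈ U.bag s) ↔ U.node v ≤ t :=
  ⟨fun ⟨_, hst, hv⟩ => mem_bag_iff_node_eq.1 hv ▸ hst, fun h => ⟨_, h, mem_bag_node v⟩⟩

theorem node_le_or_le_of_adj {v w : V} (h : G.Adj v w) :
    U.node v ≤ U.node w ∨ U.node w ≤ U.node v :=
  (U.adj_comparable v w _ _ h (mem_bag_node v) (mem_bag_node w)).symm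

theorem adj_of_node_le {v w : V} (h : U.node w ≤ U.node v) (hne : w ≠ v) : G.Adj v w := by
  have hv := U.bag_eq_universal (U.node v) ▸ mem_bag_node (U := U) v
  exact hv.2 w (exists_le_mem_bag_iff.2 h) hne

theorem node_eq_of_le_of_forall_adj {v : V} {t : U.ι} (hvt : U.node v ≤ t)
    (hadj : ∀ w, U.node w ≤ t → w ≠ v → G.Adj v w) : U.node v = t := by
  rw [← mem_bag_iff_node_eq, U.bag_eq_universal t]
  exact ⟨exists_le_mem_bag_iff.2 hvt, fun w hw => hadj w (exists_le_mem_bag_iff.1 hw)⟩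

theorem mem_closedNeighborSet_of_node_comparable {v x : V}
    (h : U.node x ≤ U.node v ∨ U.node v ≤ U.node x) : x ∈ G.closedNeighborSet v := by
  rw [mem_closedNeighborSet]
  by_cases hxv : x = v
  · exact Or.inl hxv
  · rcases h with h | h
    · exact Or.inr (adj_of_node_le h hxv)
    · exact Or.inr (adj_of_node_le h (Ne.symm hxv)).symm

theorem closedNeighborSet_subset_of_node_le {v w : V} (h : U.node w ≤ U.node v) :
    G.closedNeighborSet w ⊆ G.closedNeighborSet v := by
  intro x hx
  apply mem_closedNeighborSet_of_node_comparable
  rcases mem_closedNeighborSet.1 hx with rfl | hwx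
  · exact Or.inl h
  · rcases node_le_or_le_of_adj hwx with hwx | hxw
    · exact U.up_chain _ _ _ hwx h
    · exact Or.inl (hxw.trans h)

-- If `N[w] ⊆ N[v]` but `v` sat strictly below `w`, then `v` would be universal in the subtree
-- of `w`, hence in the bag of `w`.
theorem node_le_of_closedNeighborSet_subset {v w : V}
    (h : G.closedNeighborSet w ⊆ G.closedNeighborSet v) : U.node w ≤ U.node v := by
  rcases mem_closedNeighborSet.1 (h (Set.mem_insert w _)) with rfl | hvw
  · exact le_rfl
  rcases node_le_or_le_of_adj hvw with hvw' | hwv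
  · refine (node_eq_of_le_of_forall_adj hvw' fun x hx hxv => ?_).ge
    by_cases hxw : x = w
    · exact hxw ▸ hvw
    · exact (mem_closedNeighborSet.1 (h (Or.inr (adj_of_node_le hx hxw)))).resolve_left hxv
  · exact hwv

theorem node_le_node_iff {v w : V} :
    U.node w ≤ U.node v ↔ G.closedNeighborSet w ⊆ G.closedNeighborSet v :=
  ⟨closedNeighborSet_subset_of_node_le, node_le_of_closedNeighborSet_subset⟩

end UCD

theorem ucd_unique_general {V : Type u} (G : SimpleGraph V) (U U' : UCD G) :
    ∃ f : U.ι ≃o U'.ι, f ⊤ = ⊤ ∧ (∀ s t : U.ι, s ⋖ t ↔ f s ⋖ f t) ∧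
      ∀ t : U.ι, U'.bag (f t) = U.bag t := by
  obtain ⟨f, hf⟩ := exists_orderIso_comp_eq UCD.node_surjective UCD.node_surjective
    fun v w => (UCD.node_le_node_iff (U := U)).trans UCD.node_le_node_iff.symm
  refine ⟨f, f.map_top, fun s t => (apply_covBy_apply_iff f).symm, fun t => ?_⟩
  ext x
  simp only [UCD.bag_eq_preimage_node, Set.mem_preimage, Set.mem_singleton_iff, ← hf,
    f.apply_eq_iff_eq]

/-- Uniqueness of the universal clique decomposition of a connected trivially perfect graph,
up to an isomorphism of the rooted trees preserving the bags. -/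
theorem ucd_unique {V : Type u} [Fintype V] (G : SimpleGraph V) (hG : G.Connected)
    (hTP : TriviallyPerfect G) (U U' : UCD G) :
    ∃ f : U.ι ≃o U'.ι, f ⊤ = ⊤ ∧ (∀ s t : U.ι, s ⋖ t ↔ f s ⋖ f t) ∧
      ∀ t : U.ι, U'.bag (f t) = U.bag t :=
  ucd_unique_general G U U'
end

section
/- Let (T, {B_t}) be the universal clique decomposition of a connected trivially perfect graph G, and let L = (B, D) be a block with tail Q. Then the following are equivalent: (1) L is a leaf block; (2) D = B; (3) Q is a maximal clique of G. -/
open SimpleGraph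

universe u

/-!
Every vertex in the bag of a node is adjacent to every other vertex of its subtree, and the nodes
above `t` form a chain, so the tail `Q_t` is a clique. At a leaf `t`, a vertex adjacent to a
vertex of `B_t` lies in a node comparable with `t`, hence above it, so nothing extends `Q_t`.
At a non-leaf, a child `s < t` has the strictly larger clique `Q_s`.
-/

namespace UCD

variable {V : Type u} {G : SimpleGraph V} (U : UCD G)

lemma eq_of_mem_bag {s t : U.ι} {v : V} (hs : v ∈ U.bag s) (ht : v ∈ U.bag t) : s = t :=
  by_contra fun hst => (U.bag_disjoint s t hst).ne_of_mem hs ht rfl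

lemma bag_subset_subtreeSet (t : U.ι) : U.bag t ⊆ U.subtreeSet t :=
  fun _ hv => ⟨t, le_rfl, hv⟩

lemma bag_subset_tailSet (t : U.ι) : U.bag t ⊆ U.tailSet t :=
  fun _ hv => ⟨t, le_rfl, hv⟩

lemma tailSet_anti : Antitone U.tailSet :=
  fun _ _ hst _ ⟨r, htr, hv⟩ => ⟨r, hst.trans htr, hv⟩

lemma tailSet_ssubset_of_lt {s t : U.ι} (hst : s < t) : U.tailSet t ⊂ U.tailSet s := by
  refine (U.tailSet_anti hst.le).ssubset_of_not_subset fun hsub => ?_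
  obtain ⟨v, hv⟩ := U.bag_nonempty s
  obtain ⟨r, htr, hvr⟩ := hsub (U.bag_subset_tailSet s hv)
  rw [← U.eq_of_mem_bag hv hvr] at htr
  exact hst.not_ge htr

lemma adj_of_mem_bag_of_le {s t : U.ι} {v w : V} (hst : s ≤ t) (hv : v ∈ U.bag s)
    (hw : w ∈ U.bag t) (hvw : v ≠ w) : G.Adj v w := by
  rw [U.bag_eq_universal t] at hw
  exact (hw.2 v ⟨s, hst, hv⟩ hvw).symm

lemma isClique_tailSet (t : U.ι) : G.IsClique (U.tailSet t) := by
  rintro v ⟨r, htr, hv⟩ w ⟨r', htr', hw⟩ hvw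
  rcases U.up_chain t r r' htr htr' with hrr' | hr'r
  · exact U.adj_of_mem_bag_of_le hrr' hv hw hvw
  · exact (U.adj_of_mem_bag_of_le hr'r hw hv hvw.symm).symm

lemma mem_tailSet_of_adj {t : U.ι} (ht : U.IsLeaf t) {v w : V} (hw : w ∈ U.bag t)
    (hvw : G.Adj v w) : v ∈ U.tailSet t := by
  obtain ⟨s, hv⟩ := U.bag_cover v
  rcases U.adj_comparable v w t s hvw hv hw with hts | hst
  · exact ⟨s, hts, hv⟩
  · exact ht s hst ▸ U.bag_subset_tailSet s hv

lemma isLeaf_iff_subtreeSet_eq_bag (t : U.ι) : U.IsLeaf t ↔ U.subtreeSet t = U.bag t := by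
  refine ⟨fun ht => ?_, fun hD s hst => ?_⟩
  · refine (U.bag_subset_subtreeSet t).antisymm' ?_
    rintro v ⟨s, hst, hv⟩
    exact ht s hst ▸ hv
  · obtain ⟨v, hv⟩ := U.bag_nonempty s
    exact U.eq_of_mem_bag hv (hD ▸ ⟨s, hst, hv⟩)

lemma isLeaf_iff_maximal_isClique_tailSet (t : U.ι) :
    U.IsLeaf t ↔ Maximal G.IsClique (U.tailSet t) := by
  refine ⟨fun ht => ⟨U.isClique_tailSet t, fun C hC hsub v hv => ?_⟩, fun hmax s hst => ?_⟩
  · obtain ⟨w, hw⟩ := U.bag_nonempty t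
    by_cases hvw : v = w
    · exact hvw ▸ U.bag_subset_tailSet t hw
    · exact U.mem_tailSet_of_adj ht hw (hC hv (hsub (U.bag_subset_tailSet t hw)) hvw)
  · by_contra hne
    have hQ := hmax.eq_of_subset (U.isClique_tailSet s) (U.tailSet_anti hst)
    exact (U.tailSet_ssubset_of_lt (hst.lt_of_ne hne)).ne hQ

end UCD

theorem ucd_leaf_tfae_general {V : Type u} (G : SimpleGraph V)
    (U : UCD G) (t : U.ι) :
    (U.IsLeaf t ↔ U.subtreeSet t = U.bag t) ∧
    (U.IsLeaf t ↔ Maximal G.IsClique (U.tailSet t)) :=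
  ⟨U.isLeaf_iff_subtreeSet_eq_bag t, U.isLeaf_iff_maximal_isClique_tailSet t⟩

/-- For a block `(B, D)` with tail `Q` of the universal clique decomposition of a connected
trivially perfect graph, the following are equivalent: the block is a leaf block; `D = B`;
`Q` is a maximal clique of `G`. -/
theorem ucd_leaf_tfae {V : Type u} [Fintype V] (G : SimpleGraph V)
    (hG : G.Connected) (hTP : TriviallyPerfect G) (U : UCD G) (t : U.ι) :
    (U.IsLeaf t ↔ U.subtreeSet t = U.bag t) ∧
    (U.IsLeaf t ↔ Maximal G.IsClique (U.tailSet t)) :=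
  ucd_leaf_tfae_general G U t
end

section
/- Let p ≥ 2 be an integer and let G be the graph with vertex set {u_i, t_i, b_i, d_i : 0 ≤ i < 4p} and edge set (all indices modulo 4p) {u_i t_i, u_i t_{i+1}, t_i u_{i+1}, t_i t_{i+1}, t_i b_i, b_i b_{i+1}, b_i d_{i+1}, b_i d_i, d_i b_{i+1} : 0 ≤ i < 4p}. Then the minimum size of a set S of non-edges of G such that G+S contains no induced C4 is 4p; moreover, there are exactly two such sets of size 4p, namely {t_i b_{i+1} : 0 ≤ i < 4p} and {t_{i+1} b_i : 0 ≤ i < 4p}. -/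
/-!
Every rung square `t_i t_{i+1} b_{i+1} b_i` is an induced `C₄` whose two non-edges are the chords
`t_i b_{i+1}` and `t_{i+1} b_i`, so a completion contains one of them for each `i`, and these `4p`
chords are distinct. In a completion of size `4p` they are all of `S`, and two consecutive chords of
opposite directions close a new induced `C₄` (`t_i u_{i+1} t_{i+2} b_{i+1}` or
`b_i t_{i+1} b_{i+2} d_{i+1}`), so all chords point the same way. Conversely, adding all chords of
one direction creates no induced `C₄`: such a square spans at most five consecutive columns, so it
lifts to the same graph on columns indexed by `ℕ`, where the finitely many candidates are checked by
`decide`.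
-/

open SimpleGraph

/-- The cyclic "tape" variable gadget of the reduction from 3-SAT to `C₄`-free completion:
vertices `(i, r)` with `i : Fin (4p)` and `r : Fin 4`, where `r = 0, 1, 2, 3` encode
`u_i, t_i, b_i, d_i`, and the edges are (indices modulo `4p`):
`u_i t_i`, `u_i t_{i+1}`, `t_i u_{i+1}`, `t_i t_{i+1}`, `t_i b_i`, `b_i b_{i+1}`,
`b_i d_{i+1}`, `b_i d_i`, `d_i b_{i+1}`. -/
def tapeGadget (p : ℕ) : SimpleGraph (Fin (4 * p) × Fin 4) :=
  SimpleGraph.fromRel (fun u w =>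
    ((w.1 : ℕ) = (u.1 : ℕ) ∧
      (((u.2 : ℕ) = 0 ∧ (w.2 : ℕ) = 1) ∨ ((u.2 : ℕ) = 1 ∧ (w.2 : ℕ) = 2) ∨
       ((u.2 : ℕ) = 2 ∧ (w.2 : ℕ) = 3))) ∨
    ((w.1 : ℕ) = ((u.1 : ℕ) + 1) % (4 * p) ∧
      (((u.2 : ℕ) = 0 ∧ (w.2 : ℕ) = 1) ∨ ((u.2 : ℕ) = 1 ∧ (w.2 : ℕ) = 0) ∨
       ((u.2 : ℕ) = 1 ∧ (w.2 : ℕ) = 1) ∨ ((u.2 : ℕ) = 2 ∧ (w.2 : ℕ) = 2) ∨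
       ((u.2 : ℕ) = 2 ∧ (w.2 : ℕ) = 3) ∨ ((u.2 : ℕ) = 3 ∧ (w.2 : ℕ) = 2))))

open Fin.NatCast Fin.CommRing

section InducedSquare

variable {V : Type*}

def IsInducedSquare (G : SimpleGraph V) (a b c d : V) : Prop :=
  G.Adj a b ∧ G.Adj b c ∧ G.Adj c d ∧ G.Adj d a ∧ ¬ G.Adj a c ∧ ¬ G.Adj b d ∧ a ≠ c ∧ b ≠ d

instance [DecidableEq V] (G : SimpleGraph V) [DecidableRel G.Adj] (a b c d : V) :
    Decidable (IsInducedSquare G a b c d) := by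
  unfold IsInducedSquare; infer_instance

theorem nonempty_cycleGraph_four_embedding_iff {G : SimpleGraph V} :
    Nonempty (cycleGraph 4 ↪g G) ↔ ∃ a b c d, IsInducedSquare G a b c d := by
  constructor
  · rintro ⟨f⟩
    have adj (i j : Fin 4) (h : (cycleGraph 4).Adj i j) : G.Adj (f i) (f j) := f.map_rel_iff.mpr h
    have nadj (i j : Fin 4) (h : ¬ (cycleGraph 4).Adj i j) : ¬ G.Adj (f i) (f j) :=
      mt f.map_rel_iff.mp h
    exact ⟨f 0, f 1, f 2, f 3, adj 0 1 (by decide), adj 1 2 (by decide), adj 2 3 (by decide),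
      adj 3 0 (by decide), nadj 0 2 (by decide), nadj 1 3 (by decide),
      f.injective.ne (by decide), f.injective.ne (by decide)⟩
  · rintro ⟨a, b, c, d, hab, hbc, hcd, hda, hac, hbd, hac', hbd'⟩
    refine ⟨⟨⟨![a, b, c, d], fun i j h => ?_⟩, fun {i j} => ?_⟩⟩
    · fin_cases i <;> fin_cases j <;> simp_all [eq_comm, hab.ne, hbc.ne, hcd.ne]
    · change G.Adj (![a, b, c, d] i) (![a, b, c, d] j) ↔ _
      fin_cases i <;> fin_cases j <;> simp [cycleGraph_adj, G.adj_comm, hda.symm, *] <;> decide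

theorem isInducedSquare_map_iff {W : Type*} {G : SimpleGraph V} {H : SimpleGraph W} {φ : V → W}
    {s : Set V} (hinj : Set.InjOn φ s) (hadj : ∀ x ∈ s, ∀ y ∈ s, (H.Adj (φ x) (φ y) ↔ G.Adj x y))
    {a b c d : V} (ha : a ∈ s) (hb : b ∈ s) (hc : c ∈ s) (hd : d ∈ s) :
    IsInducedSquare H (φ a) (φ b) (φ c) (φ d) ↔ IsInducedSquare G a b c d := by
  simp only [IsInducedSquare, hadj _ ha _ hb, hadj _ hb _ hc, hadj _ hc _ hd, hadj _ hd _ ha,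
    hadj _ ha _ hc, hadj _ hb _ hd, hinj.ne_iff ha hc, hinj.ne_iff hb hd]

end InducedSquare

section Ladder

variable {P Q α : Type*}

def ladder (s : P → P) (R₀ R₁ : α → α → Prop) : SimpleGraph (P × α) :=
  fromRel fun x y => (y.1 = x.1 ∧ R₀ x.2 y.2) ∨ (y.1 = s x.1 ∧ R₁ x.2 y.2)

instance [DecidableEq P] [DecidableEq α] (s : P → P) (R₀ R₁ : α → α → Prop) [DecidableRel R₀]
    [DecidableRel R₁] : DecidableRel (ladder s R₀ R₁).Adj := fun _ _ =>
  decidable_of_iff' _ (fromRel_adj _ _ _)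

def withChord (R : α → α → Prop) (a b : α) (r r' : α) : Prop := R r r' ∨ r = a ∧ r' = b

instance [DecidableEq α] (R : α → α → Prop) [DecidableRel R] (a b : α) :
    DecidableRel (withChord R a b) := fun _ _ => by
  unfold withChord; infer_instance

def chords (s : P → P) (a b : α) : Set (Sym2 (P × α)) := Set.range fun p => s((p, a), (s p, b))

variable {s : P → P} {R₀ R₁ : α → α → Prop}

theorem ladder_adj {x y : P × α} :
    (ladder s R₀ R₁).Adj x y ↔ x ≠ y ∧
      (((y.1 = x.1 ∧ R₀ x.2 y.2) ∨ (y.1 = s x.1 ∧ R₁ x.2 y.2)) ∨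
        ((x.1 = y.1 ∧ R₀ y.2 x.2) ∨ (x.1 = s y.1 ∧ R₁ y.2 x.2))) :=
  fromRel_adj _ _ _

theorem ladder_adj_fst {x y : P × α} (h : (ladder s R₀ R₁).Adj x y) :
    y.1 = x.1 ∨ y.1 = s x.1 ∨ x.1 = s y.1 := by
  rw [ladder_adj] at h
  rcases h with ⟨-, (⟨h, -⟩ | ⟨h, -⟩) | (⟨h, -⟩ | ⟨h, -⟩)⟩
  exacts [.inl h, .inr (.inl h), .inl h.symm, .inr (.inr h)]

theorem ladder_adj_map_iff {t : Q → Q} (φ : P → Q) (hφ : ∀ p, φ (s p) = t (φ p))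
    {x y : P × α} (hinj : Set.InjOn φ {x.1, y.1, s x.1, s y.1}) :
    (ladder t R₀ R₁).Adj (φ x.1, x.2) (φ y.1, y.2) ↔ (ladder s R₀ R₁).Adj x y := by
  have hxy : φ x.1 = φ y.1 ↔ x.1 = y.1 := hinj.eq_iff (by simp) (by simp)
  have hyx : φ y.1 = φ x.1 ↔ y.1 = x.1 := hinj.eq_iff (by simp) (by simp)
  have hsx : φ y.1 = t (φ x.1) ↔ y.1 = s x.1 := by rw [← hφ]; exact hinj.eq_iff (by simp) (by simp)
  have hsy : φ x.1 = t (φ y.1) ↔ x.1 = s y.1 := by rw [← hφ]; exact hinj.eq_iff (by simp) (by simp)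
  simp only [ladder_adj, Ne, Prod.ext_iff, hxy, hyx, hsx, hsy]

theorem ladder_sup_fromEdgeSet_chords (a b : α) :
    ladder s R₀ R₁ ⊔ fromEdgeSet (chords s a b) = ladder s R₀ (withChord R₁ a b) := by
  ext x y
  simp only [sup_adj, fromEdgeSet_adj, ladder_adj, chords, withChord, Set.mem_range, Sym2.eq_iff]
  constructor
  · rintro (h | ⟨⟨p, ⟨rfl, rfl⟩ | ⟨rfl, rfl⟩⟩, hne⟩)
    · tauto
    · exact ⟨hne, .inl (.inr ⟨rfl, .inr ⟨rfl, rfl⟩⟩)⟩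
    · exact ⟨hne, .inr (.inr ⟨rfl, .inr ⟨rfl, rfl⟩⟩)⟩
  · rintro ⟨hne, (h | ⟨hs, hR | ⟨ha, hb⟩⟩) | (h | ⟨hs, hR | ⟨ha, hb⟩⟩)⟩
    · exact .inl ⟨hne, .inl (.inl h)⟩
    · exact .inl ⟨hne, .inl (.inr ⟨hs, hR⟩)⟩
    · exact .inr ⟨⟨x.1, .inl ⟨Prod.ext rfl ha.symm, Prod.ext hs.symm hb.symm⟩⟩, hne⟩
    · exact .inl ⟨hne, .inr (.inl h)⟩
    · exact .inl ⟨hne, .inr (.inr ⟨hs, hR⟩)⟩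
    · exact .inr ⟨⟨y.1, .inr ⟨Prod.ext rfl ha.symm, Prod.ext hs.symm hb.symm⟩⟩, hne⟩

theorem not_isDiag_of_mem_chords {a b : α} (hab : a ≠ b) {e : Sym2 (P × α)}
    (he : e ∈ chords s a b) : ¬ e.IsDiag := by
  obtain ⟨p, rfl⟩ := he
  exact fun h => hab (congrArg Prod.snd (Sym2.mk_isDiag_iff.mp h))

theorem ncard_chords [Finite P] {a b : α} (hab : a ≠ b) : (chords s a b).ncard = Nat.card P :=
  Set.ncard_range_of_injective fun p q h => by
    rcases Sym2.eq_iff.mp h with ⟨h, -⟩ | ⟨h, -⟩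
    exacts [congrArg Prod.fst h, absurd (congrArg Prod.snd h) hab]

end Ladder

section Shift

variable {n : ℕ} [NeZero n] {α : Type*} {R₀ R₁ : α → α → Prop}

theorem Fin.val_eq_val_add_one_mod_iff {i j : Fin n} : (j : ℕ) = ((i : ℕ) + 1) % n ↔ j = i + 1 := by
  rw [Fin.ext_iff, Fin.val_add, Fin.val_one', Nat.add_mod_mod]

theorem chords_eq_setOf (a b : α) : chords (fun i : Fin n => i + 1) a b =
    {e | ∃ i j : Fin n, (j : ℕ) = ((i : ℕ) + 1) % n ∧ e = s((i, a), (j, b))} := by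
  ext e
  simp [chords, Fin.val_eq_val_add_one_mod_iff, eq_comm]

theorem chords_eq_setOf_swap (a b : α) : chords (fun i : Fin n => i + 1) b a =
    {e | ∃ i j : Fin n, (j : ℕ) = ((i : ℕ) + 1) % n ∧ e = s((j, a), (i, b))} := by
  rw [chords_eq_setOf]
  simp only [Sym2.eq_swap]

def shift (i : Fin n) (v : ℕ × α) : Fin n × α := (i + v.1, v.2)

theorem Fin.injOn_add_natCast (i : Fin n) :
    Set.InjOn (fun q : ℕ => i + (q : Fin n)) (Set.Iio n) := by
  intro q hq q' hq' h
  simpa [Fin.ext_iff, Nat.mod_eq_of_lt hq, Nat.mod_eq_of_lt hq'] using h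

theorem shift_injOn (i : Fin n) : Set.InjOn (shift (α := α) i) {v | v.1 < n} :=
  fun _ hv _ hw h =>
    Prod.ext (Fin.injOn_add_natCast i hv hw (congrArg Prod.fst h)) (Prod.ext_iff.mp h).2

theorem ladder_adj_shift_iff (i : Fin n) {x y : ℕ × α} (hx : x.1 + 1 < n) (hy : y.1 + 1 < n) :
    (ladder (· + 1) R₀ R₁).Adj (shift i x) (shift i y) ↔ (ladder Nat.succ R₀ R₁).Adj x y :=
  ladder_adj_map_iff _ (fun q => by simp [add_assoc]) <| (Fin.injOn_add_natCast i).mono <| by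
    rintro _ (rfl | rfl | rfl | rfl) <;> simp only [Set.mem_Iio, Nat.succ_eq_add_one] <;> omega

theorem exists_shift_eq_of_ladder_adj {base : Fin n} {q : ℕ} {x y : Fin n × α} (hq : 1 ≤ q)
    (hx : x.1 = base + q) (h : (ladder (· + 1) R₀ R₁).Adj x y) :
    ∃ q', q' ≤ q + 1 ∧ q ≤ q' + 1 ∧ y = shift base (q', y.2) := by
  rcases ladder_adj_fst h with h | h | h
  · exact ⟨q, by omega, by omega, Prod.ext (h.trans hx) rfl⟩
  · exact ⟨q + 1, by omega, by omega, Prod.ext (by simp [shift, h, hx, add_assoc]) rfl⟩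
  · refine ⟨q - 1, by omega, by omega, Prod.ext ?_ rfl⟩
    simp [shift, eq_sub_of_add_eq h.symm, hx, Nat.cast_sub hq, add_sub_assoc]

/-- Translating a square so that its first vertex lies in column `2` puts it inside columns
`0, …, 4`, where `shift` identifies the cyclic ladder with the one on `ℕ`. -/
theorem ladder_isEmpty_of_local (hn : 6 ≤ n)
    (hloc : ∀ r, ∀ q₁ < 5, ∀ r₁, ∀ q₂ < 5, ∀ r₂, ∀ q₃ < 5, ∀ r₃,
      ¬ IsInducedSquare (ladder Nat.succ R₀ R₁) (2, r) (q₁, r₁) (q₂, r₂) (q₃, r₃)) :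
    IsEmpty (cycleGraph 4 ↪g ladder (fun i : Fin n => i + 1) R₀ R₁) := by
  rw [← not_nonempty_iff, nonempty_cycleGraph_four_embedding_iff]
  rintro ⟨a, b, c, d, hsq⟩
  have ha : a = shift (a.1 - 2) (2, a.2) := Prod.ext (by simp [shift]) rfl
  obtain ⟨q₁, h₁, h₁', hb⟩ := exists_shift_eq_of_ladder_adj (q := 2) one_le_two
    (congrArg Prod.fst ha) hsq.1
  obtain ⟨q₂, h₂, -, hc⟩ := exists_shift_eq_of_ladder_adj (by omega) (congrArg Prod.fst hb) hsq.2.1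
  obtain ⟨q₃, h₃, -, hd⟩ := exists_shift_eq_of_ladder_adj (q := 2) one_le_two
    (congrArg Prod.fst ha) hsq.2.2.2.1.symm
  have hinj : Set.InjOn (shift (a.1 - 2)) {v : ℕ × α | v.1 + 1 < n} :=
    (shift_injOn _).mono fun v (hv : v.1 + 1 < n) => show v.1 < n by omega
  rw [ha, hb, hc, hd, isInducedSquare_map_iff hinj (fun x hx y hy => ladder_adj_shift_iff _ hx hy)
    (show 2 + 1 < n by omega) (show q₁ + 1 < n by omega) (show q₂ + 1 < n by omega)
    (show q₃ + 1 < n by omega)] at hsq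
  exact hloc _ _ (by omega) _ _ (by omega) _ _ (by omega) _ hsq

end Shift

section Tape

def tapeSame (r r' : Fin 4) : Prop :=
  ((r : ℕ) = 0 ∧ (r' : ℕ) = 1) ∨ ((r : ℕ) = 1 ∧ (r' : ℕ) = 2) ∨ ((r : ℕ) = 2 ∧ (r' : ℕ) = 3)

def tapeNext (r r' : Fin 4) : Prop :=
  ((r : ℕ) = 0 ∧ (r' : ℕ) = 1) ∨ ((r : ℕ) = 1 ∧ (r' : ℕ) = 0) ∨
    ((r : ℕ) = 1 ∧ (r' : ℕ) = 1) ∨ ((r : ℕ) = 2 ∧ (r' : ℕ) = 2) ∨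
    ((r : ℕ) = 2 ∧ (r' : ℕ) = 3) ∨ ((r : ℕ) = 3 ∧ (r' : ℕ) = 2)

instance : DecidableRel tapeSame := fun _ _ => by unfold tapeSame; infer_instance

instance : DecidableRel tapeNext := fun _ _ => by unfold tapeNext; infer_instance

variable {n : ℕ} [NeZero n]

variable (n) in
def tape : SimpleGraph (Fin n × Fin 4) := ladder (· + 1) tapeSame tapeNext

theorem tapeGadget_eq (p : ℕ) [NeZero p] : tapeGadget p = tape (4 * p) := by
  simp only [tapeGadget, tape, ladder, tapeSame, tapeNext, Fin.val_eq_val_add_one_mod_iff,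
    Fin.val_inj]

set_option synthInstance.maxSize 1000 in
theorem not_isInducedSquare_nat_tape_withChord {a b : Fin 4} (hab : a = 1 ∧ b = 2 ∨ a = 2 ∧ b = 1) :
    ∀ r, ∀ q₁ < 5, ∀ r₁, ∀ q₂ < 5, ∀ r₂, ∀ q₃ < 5, ∀ r₃,
      ¬ IsInducedSquare (ladder Nat.succ tapeSame (withChord tapeNext a b))
        (2, r) (q₁, r₁) (q₂, r₂) (q₃, r₃) := by
  rcases hab with ⟨rfl, rfl⟩ | ⟨rfl, rfl⟩ <;> decide +kernel

theorem isEmpty_tape_sup_chords (hn : 6 ≤ n) {a b : Fin 4} (hab : a = 1 ∧ b = 2 ∨ a = 2 ∧ b = 1) :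
    IsEmpty (cycleGraph 4 ↪g tape n ⊔ fromEdgeSet (chords (· + 1) a b)) := by
  rw [tape, ladder_sup_fromEdgeSet_chords]
  exact ladder_isEmpty_of_local hn (not_isInducedSquare_nat_tape_withChord hab)

theorem disjoint_chords_edgeSet_tape (hn : 3 ≤ n) {a b : Fin 4}
    (hab : a = 1 ∧ b = 2 ∨ a = 2 ∧ b = 1) : Disjoint (chords (· + 1) a b) (tape n).edgeSet := by
  rw [Set.disjoint_left]
  rintro _ ⟨i, rfl⟩ h
  have := (ladder_adj_shift_iff (R₀ := tapeSame) (R₁ := tapeNext) i (x := (0, a)) (y := (1, b))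
    (by omega) (by omega)).mp (by simpa [shift, tape] using h)
  rcases hab with ⟨rfl, rfl⟩ | ⟨rfl, rfl⟩ <;> revert this <;> decide

end Tape

section Completion

theorem not_sup_fromEdgeSet_adj_of_rows {P α : Type*} {G : SimpleGraph (P × α)}
    {T : Set (Sym2 (P × α))} {a b : α} (hT : ∀ x y, s(x, y) ∈ T → s(x.2, y.2) = s(a, b))
    {x y : P × α} (hG : ¬ G.Adj x y) (hxy : s(x.2, y.2) ≠ s(a, b)) :
    ¬ (G ⊔ fromEdgeSet T).Adj x y := by
  rw [sup_adj, fromEdgeSet_adj]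
  rintro (h | ⟨h, -⟩)
  exacts [hG h, hxy (hT x y h)]

variable {n : ℕ} [NeZero n] {S : Set (Sym2 (Fin n × Fin 4))}

def rightChord (i : Fin n) : Sym2 (Fin n × Fin 4) := s((i, 1), (i + 1, 2))

def leftChord (i : Fin n) : Sym2 (Fin n × Fin 4) := s((i + 1, 1), (i, 2))

theorem rightChord_injective : Function.Injective (rightChord (n := n)) := fun i j h => by
  rcases Sym2.eq_iff.mp h with ⟨h, -⟩ | ⟨h, -⟩
  exacts [congrArg Prod.fst h, ((by decide : (1 : Fin 4) ≠ 2) (congrArg Prod.snd h)).elim]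

theorem leftChord_injective : Function.Injective (leftChord (n := n)) := fun i j h => by
  rcases Sym2.eq_iff.mp h with ⟨-, h⟩ | ⟨h, -⟩
  exacts [congrArg Prod.fst h, ((by decide : (1 : Fin 4) ≠ 2) (congrArg Prod.snd h)).elim]

theorem rightChord_ne_leftChord (hn : 3 ≤ n) (i j : Fin n) : rightChord i ≠ leftChord j := by
  intro h
  rcases Sym2.eq_iff.mp h with ⟨h₁, h₂⟩ | ⟨h, -⟩
  · have h₁ : i = j + 1 := congrArg Prod.fst h₁
    have h₂ : i + 1 = j := congrArg Prod.fst h₂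
    have : j + ((2 : ℕ) : Fin n) = j + ((0 : ℕ) : Fin n) := by
      subst h₁; push_cast; linear_combination h₂
    exact absurd (Fin.injOn_add_natCast j (by simp; omega) (by simp; omega) this) (by omega)
  · exact (by decide : (1 : Fin 4) ≠ 2) (congrArg Prod.snd h)

theorem tape_sup_adj_shift_iff (i : Fin n) (S : Set (Sym2 (Fin n × Fin 4))) {x y : ℕ × Fin 4}
    (hx : x.1 + 1 < n) (hy : y.1 + 1 < n) :
    (tape n ⊔ fromEdgeSet S).Adj (shift i x) (shift i y) ↔
      (ladder Nat.succ tapeSame tapeNext ⊔ fromEdgeSet (Sym2.map (shift i) ⁻¹' S)).Adj x y := by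
  rw [sup_adj, sup_adj, tape, ladder_adj_shift_iff i hx hy, fromEdgeSet_adj, fromEdgeSet_adj,
    Set.mem_preimage, Sym2.map_mk, (shift_injOn i).ne_iff (by simp; omega) (by simp; omega)]

theorem nonempty_of_isInducedSquare_shift (i : Fin n) {a b c d : ℕ × Fin 4}
    (ha : a.1 + 1 < n) (hb : b.1 + 1 < n) (hc : c.1 + 1 < n) (hd : d.1 + 1 < n)
    (h : IsInducedSquare
      (ladder Nat.succ tapeSame tapeNext ⊔ fromEdgeSet (Sym2.map (shift i) ⁻¹' S)) a b c d) :
    Nonempty (cycleGraph 4 ↪g tape n ⊔ fromEdgeSet S) := by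
  have hinj : Set.InjOn (shift i) {v : ℕ × Fin 4 | v.1 + 1 < n} :=
    (shift_injOn _).mono fun v (hv : v.1 + 1 < n) => show v.1 < n by omega
  rw [← isInducedSquare_map_iff hinj (fun x hx y hy => tape_sup_adj_shift_iff i S hx hy)
    ha hb hc hd] at h
  exact nonempty_cycleGraph_four_embedding_iff.mpr ⟨_, _, _, _, h⟩

theorem rightChord_mem_or_leftChord_mem (hn : 3 ≤ n)
    (hfree : IsEmpty (cycleGraph 4 ↪g tape n ⊔ fromEdgeSet S)) (i : Fin n) :
    rightChord i ∈ S ∨ leftChord i ∈ S := by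
  by_contra! h
  refine (nonempty_of_isInducedSquare_shift i (a := (0, 1)) (b := (1, 1)) (c := (1, 2))
    (d := (0, 2)) (by simp; omega) (by simp; omega) (by simp; omega) (by simp; omega)
    ⟨.inl (by decide), .inl (by decide), .inl (by decide), .inl (by decide), ?_, ?_,
      by decide, by decide⟩).elim hfree.false
  · rintro (h' | ⟨h', -⟩)
    exacts [absurd h' (by decide), h.1 (by simpa [shift, rightChord] using h')]
  · rintro (h' | ⟨h', -⟩)
    exacts [absurd h' (by decide), h.2 (by simpa [shift, leftChord] using h')]

theorem not_rightChord_mem_and_leftChord_add_one_mem (hn : 4 ≤ n)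
    (hfree : IsEmpty (cycleGraph 4 ↪g tape n ⊔ fromEdgeSet S))
    (hS : ∀ x y, s(x, y) ∈ S → s(x.2, y.2) = s(1, 2)) (i : Fin n)
    (hr : rightChord i ∈ S) (hl : leftChord (i + 1) ∈ S) : False := by
  refine (nonempty_of_isInducedSquare_shift i (a := (0, 1)) (b := (1, 0)) (c := (2, 1))
    (d := (1, 2)) (by simp; omega) (by simp; omega) (by simp; omega) (by simp; omega)
    ⟨.inl (by decide), .inl (by decide), .inr ⟨?_, by decide⟩, .inr ⟨?_, by decide⟩,
      ?_, ?_, by decide, by decide⟩).elim hfree.false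
  · simpa [shift, leftChord, add_assoc, one_add_one_eq_two] using hl
  · simpa [shift, rightChord, Sym2.eq_swap] using hr
  all_goals
    refine not_sup_fromEdgeSet_adj_of_rows (a := 1) (b := 2) ?_ (by decide) (by decide)
    exact fun x y h => hS _ _ h

theorem not_leftChord_mem_and_rightChord_add_one_mem (hn : 4 ≤ n)
    (hfree : IsEmpty (cycleGraph 4 ↪g tape n ⊔ fromEdgeSet S))
    (hS : ∀ x y, s(x, y) ∈ S → s(x.2, y.2) = s(1, 2)) (i : Fin n)
    (hl : leftChord i ∈ S) (hr : rightChord (i + 1) ∈ S) : False := by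
  refine (nonempty_of_isInducedSquare_shift i (a := (0, 2)) (b := (1, 1)) (c := (2, 2))
    (d := (1, 3)) (by simp; omega) (by simp; omega) (by simp; omega) (by simp; omega)
    ⟨.inr ⟨?_, by decide⟩, .inr ⟨?_, by decide⟩, .inl (by decide), .inl (by decide),
      ?_, ?_, by decide, by decide⟩).elim hfree.false
  · simpa [shift, leftChord, Sym2.eq_swap] using hl
  · simpa [shift, rightChord, add_assoc, one_add_one_eq_two] using hr
  all_goals
    refine not_sup_fromEdgeSet_adj_of_rows (a := 1) (b := 2) ?_ (by decide) (by decide)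
    exact fun x y h => hS _ _ h

theorem exists_injective_chord_selection (hn : 3 ≤ n)
    (hfree : IsEmpty (cycleGraph 4 ↪g tape n ⊔ fromEdgeSet S)) :
    ∃ g : Fin n → Sym2 (Fin n × Fin 4), Function.Injective g ∧
      ∀ i, g i ∈ S ∧ (g i = rightChord i ∨ g i = leftChord i) := by
  have : ∀ i, ∃ e ∈ S, e = rightChord i ∨ e = leftChord i := fun i =>
    (rightChord_mem_or_leftChord_mem hn hfree i).elim
      (fun h => ⟨_, h, Or.inl rfl⟩) (fun h => ⟨_, h, Or.inr rfl⟩)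
  choose g hg using this
  refine ⟨g, fun i j h => ?_, hg⟩
  rcases (hg i).2 with hi | hi <;> rcases (hg j).2 with hj | hj <;> rw [hi, hj] at h
  · exact rightChord_injective h
  · exact absurd h (rightChord_ne_leftChord (by omega) i j)
  · exact absurd h.symm (rightChord_ne_leftChord (by omega) j i)
  · exact leftChord_injective h

theorem le_ncard_of_isEmpty (hn : 3 ≤ n)
    (hfree : IsEmpty (cycleGraph 4 ↪g tape n ⊔ fromEdgeSet S)) : n ≤ S.ncard := by
  obtain ⟨g, hg, hgS⟩ := exists_injective_chord_selection hn hfree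
  simpa using Set.ncard_le_ncard_of_injOn g (s := Set.univ) (fun i _ => (hgS i).1) hg.injOn

theorem rows_of_ncard_eq (hn : 3 ≤ n)
    (hfree : IsEmpty (cycleGraph 4 ↪g tape n ⊔ fromEdgeSet S)) (hcard : S.ncard = n) :
    ∀ x y, s(x, y) ∈ S → s(x.2, y.2) = s(1, 2) := by
  obtain ⟨g, hg, hgS⟩ := exists_injective_chord_selection hn hfree
  have hrange : Set.range g = S := Set.eq_of_subset_of_ncard_le
    (Set.range_subset_iff.2 fun i => (hgS i).1)
    (by rw [hcard, Set.ncard_range_of_injective hg, Nat.card_fin])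
  intro x y h
  obtain ⟨i, hi⟩ := hrange ▸ h
  rcases (hgS i).2 with h | h <;> rw [h] at hi <;> have := congrArg (Sym2.map Prod.snd) hi
  · simpa [rightChord] using this.symm
  · simpa [leftChord, Sym2.eq_swap] using this.symm

theorem Fin.iff_zero_of_iff_add_one {p : Fin n → Prop} (h : ∀ i, p i ↔ p (i + 1)) (i : Fin n) :
    p i ↔ p 0 := by
  rw [← Fin.cast_val_eq_self i]
  induction (i : ℕ) with
  | zero => rw [Nat.cast_zero]
  | succ k ih => rw [Nat.cast_succ, ← h, ih]

theorem rightChord_mem_iff_rightChord_add_one_mem (hn : 4 ≤ n)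
    (hfree : IsEmpty (cycleGraph 4 ↪g tape n ⊔ fromEdgeSet S))
    (hS : ∀ x y, s(x, y) ∈ S → s(x.2, y.2) = s(1, 2)) (i : Fin n) :
    rightChord i ∈ S ↔ rightChord (i + 1) ∈ S :=
  ⟨fun h => by_contra fun h' => not_rightChord_mem_and_leftChord_add_one_mem hn hfree hS i h
      ((rightChord_mem_or_leftChord_mem (by omega) hfree (i + 1)).resolve_left h'),
    fun h => by_contra fun h' => not_leftChord_mem_and_rightChord_add_one_mem hn hfree hS i
      ((rightChord_mem_or_leftChord_mem (by omega) hfree i).resolve_left h') h⟩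

theorem eq_chords_of_ncard_eq (hn : 4 ≤ n)
    (hfree : IsEmpty (cycleGraph 4 ↪g tape n ⊔ fromEdgeSet S)) (hcard : S.ncard = n) :
    S = chords (· + 1) 1 2 ∨ S = chords (· + 1) 2 1 := by
  have hright := Fin.iff_zero_of_iff_add_one
    (rightChord_mem_iff_rightChord_add_one_mem hn hfree (rows_of_ncard_eq (by omega) hfree hcard))
  have hsub {a b : Fin 4} (hab : a ≠ b) (h : chords (· + 1) a b ⊆ S) : S = chords (· + 1) a b :=
    (Set.eq_of_subset_of_ncard_le h (by rw [hcard, ncard_chords hab, Nat.card_fin])).symm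
  by_cases h0 : rightChord 0 ∈ S
  · exact .inl (hsub (by decide) (Set.range_subset_iff.2 fun i => (hright i).2 h0))
  · refine .inr (hsub (by decide) (Set.range_subset_iff.2 fun i => ?_))
    have := (rightChord_mem_or_leftChord_mem (by omega) hfree i).resolve_left (h0 ∘ (hright i).1)
    rwa [leftChord, Sym2.eq_swap] at this

end Completion

/-- The minimum number of non-edges whose addition makes the tape gadget `C₄`-free is `4p`,
and the only two optimal completion sets are `{t_i b_{i+1}}` and `{t_{i+1} b_i}`. -/
theorem tapeGadget_optimal_completions (p : ℕ) (hp : 2 ≤ p) :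
    (∀ S : Set (Sym2 (Fin (4 * p) × Fin 4)),
        (∀ e ∈ S, ¬ e.IsDiag) → Disjoint S (tapeGadget p).edgeSet →
        IsEmpty (SimpleGraph.cycleGraph 4 ↪g (tapeGadget p ⊔ SimpleGraph.fromEdgeSet S)) →
        4 * p ≤ S.ncard) ∧
    {S : Set (Sym2 (Fin (4 * p) × Fin 4)) |
        (∀ e ∈ S, ¬ e.IsDiag) ∧ Disjoint S (tapeGadget p).edgeSet ∧
        IsEmpty (SimpleGraph.cycleGraph 4 ↪g (tapeGadget p ⊔ SimpleGraph.fromEdgeSet S)) ∧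
        S.ncard = 4 * p} =
      {{e | ∃ i j : Fin (4 * p), (j : ℕ) = ((i : ℕ) + 1) % (4 * p) ∧
          e = s((i, (1 : Fin 4)), (j, (2 : Fin 4)))},
       {e | ∃ i j : Fin (4 * p), (j : ℕ) = ((i : ℕ) + 1) % (4 * p) ∧
          e = s((j, (1 : Fin 4)), (i, (2 : Fin 4)))}} := by
  have : NeZero p := ⟨by omega⟩
  have hn : 6 ≤ 4 * p := by omega
  have valid {a b : Fin 4} (hab : a = 1 ∧ b = 2 ∨ a = 2 ∧ b = 1) :
      let C := chords (fun i : Fin (4 * p) => i + 1) a b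
      (∀ e ∈ C, ¬ e.IsDiag) ∧ Disjoint C (tape (4 * p)).edgeSet ∧
        IsEmpty (cycleGraph 4 ↪g tape (4 * p) ⊔ fromEdgeSet C) ∧ C.ncard = 4 * p := by
    have hab' : a ≠ b := by rcases hab with ⟨rfl, rfl⟩ | ⟨rfl, rfl⟩ <;> decide
    exact ⟨fun _ => not_isDiag_of_mem_chords hab', disjoint_chords_edgeSet_tape (by omega) hab,
      isEmpty_tape_sup_chords hn hab, by rw [ncard_chords hab', Nat.card_fin]⟩
  rw [tapeGadget_eq, ← chords_eq_setOf, ← chords_eq_setOf_swap]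
  refine ⟨fun S _ _ hfree => le_ncard_of_isEmpty (by omega) hfree, Set.ext fun S => ⟨?_, ?_⟩⟩
  · rintro ⟨-, -, hfree, hcard⟩
    exact eq_chords_of_ncard_eq (by omega) hfree hcard
  · rintro (rfl | rfl)
    exacts [valid (.inl ⟨rfl, rfl⟩), valid (.inr ⟨rfl, rfl⟩)]
end
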